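/- arXiv:math/9406228 — 2 statements merged into one kernel-verified Lean document; each statement's English description precedes it below -/
import Mathlib

section
/- Let (n_i)_{i<ω} be an increasing sequence with n_0 = 0 and n'_i + i·2^{n'_i} < n_{i+1} where n_i < n'_i. For each 0 < i < ω fix pairwise disjoint sets u_{i,τ} ⊆ [n'_i, n_{i+1}) of size i indexed by τ ∈ 2^{n'_i}, and let B = {y ∈ 2^ω : ∀ j > 0 ∃ k ∈ u_{j, y↾n'_j}, y(k) = 1} and T = {y↾n : y ∈ B, n ∈ ω}. Then μ(Lim T) = ∏_{i=1}^∞ (1 − 2^{−i}) > 0. -/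
open MeasureTheory Pointwise

/-- Cantor space `2^ω` with componentwise addition mod 2. -/
abbrev Cantor : Type := ℕ → ZMod 2
/-- Finite binary sequences, the nodes of `2^{<ω}`. -/
abbrev FinSeq : Type := List (ZMod 2)

instance : TopologicalSpace (ZMod 2) := ⊥
instance : DiscreteTopology (ZMod 2) := ⟨rfl⟩
noncomputable instance : MeasurableSpace Cantor := borel Cantor
instance : BorelSpace Cantor := ⟨rfl⟩

/-- The uniform (Lebesgue) product measure on `2^ω`, realized as the Haar measure of the
compact group `2^ω` normalized so that the whole space has measure 1. -/
noncomputable def μC : Measure Cantor := Measure.addHaarMeasure ⊤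

/-- `X` is null-additive: `X + A` is null for every null `A`. -/
def NullAdditive (X : Set Cantor) : Prop := ∀ A : Set Cantor, μC A = 0 → μC (X + A) = 0

/-- `X` is meager-additive: `X + A` is meager for every meager `A`. -/
def MeagerAdditive (X : Set Cantor) : Prop := ∀ A : Set Cantor, IsMeagre A → IsMeagre (X + A)

/-- A tree on `2^{<ω}`: nonempty, closed under initial segments, and every node has
extensions in the tree of every greater length. -/
def IsTree (T : Set FinSeq) : Prop :=
  T.Nonempty ∧ (∀ σ τ : FinSeq, σ <+: τ → τ ∈ T → σ ∈ T) ∧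
    ∀ σ ∈ T, ∀ n, σ.length < n → ∃ τ ∈ T, σ <+: τ ∧ τ.length = n

/-- Restriction `x↾n` of `x ∈ 2^ω`. -/
def res (x : Cantor) (n : ℕ) : FinSeq := (List.range n).map x

/-- `Lim T = {x ∈ 2^ω : ∀ n, x↾n ∈ T}`. -/
def LimT (T : Set FinSeq) : Set Cantor := {x | ∀ n, res x n ∈ T}

/-- A nowhere dense tree: every node has an extension outside the tree. -/
def NwdTree (T : Set FinSeq) : Prop := ∀ η ∈ T, ∃ τ : FinSeq, η <+: τ ∧ τ ∉ T

/-- Componentwise mod-2 addition of finite sequences (of the same length). -/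
def finAdd : FinSeq → FinSeq → FinSeq := List.zipWith (· + ·)

/-- `T + S = {η + σ : η ∈ T, σ ∈ S, same length}`. -/
def treeSum (T S : Set FinSeq) : Set FinSeq :=
  {ρ | ∃ η ∈ T, ∃ σ ∈ S, η.length = σ.length ∧ ρ = finAdd η σ}

/-- `T^{[η]} = {τ ∈ T : τ ⊑ η or η ⊑ τ}`. -/
def through (T : Set FinSeq) (η : FinSeq) : Set FinSeq := {τ ∈ T | τ <+: η ∨ η <+: τ}

/-- `A^{fin}`: points agreeing with some point of `A` at all but finitely many coordinates. -/
def finEq (A : Set Cantor) : Set Cantor := {y | ∃ x ∈ A, ∀ᶠ n in Filter.atTop, y n = x n}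

/-- `U^{⟨ν⟩} = {τ : ν⌢τ ∈ U}`. -/
def above (U : Set FinSeq) (ν : FinSeq) : Set FinSeq := {τ | ν ++ τ ∈ U}

/-- A corset: a nondecreasing function `ω → ω \ {0}` tending to infinity. -/
def Corset (f : ℕ → ℕ) : Prop :=
  Monotone f ∧ (∀ n, 0 < f n) ∧ Filter.Tendsto f Filter.atTop Filter.atTop

/-- `S` is of width `f`: `|S ∩ 2^n| ≤ f n` for all `n`. -/
def widthLe (S : Set FinSeq) (f : ℕ → ℕ) : Prop := ∀ n, {τ ∈ S | τ.length = n}.ncard ≤ f n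

/-- `S` is almost of width `f`: `|S ∩ 2^n| ≤ f n` for all sufficiently large `n`. -/
def almostWidthLe (S : Set FinSeq) (f : ℕ → ℕ) : Prop :=
  ∀ᶠ n in Filter.atTop, {τ ∈ S | τ.length = n}.ncard ≤ f n

/-! `B` is the decreasing intersection of the sets `hitsUpTo n' u m` of those `y` that put a `1`
into the block `u j (y↾n'_j)` for every `0 < j ≤ m`. Each of these conditions reads only the
prefix `y↾n_{j+1}`, hence `Lim T = B`. The set `hitsUpTo n' u m` is a union of cylinders of
length `n'_{m+1}`, and on each such cylinder `[τ]` the condition for `m + 1` fails exactly on the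
subcylinder where the `m + 1` coordinates of `u (m+1) τ`, all beyond `n'_{m+1}`, vanish. By
translation invariance a cylinder fixing `k` coordinates has measure `2^{-k}`, so the condition
cuts the measure by the factor `1 - 2^{-(m+1)}`, and continuity from above gives the product. -/

instance : μC.IsAddLeftInvariant := by unfold μC; infer_instance

lemma μC_univ : μC Set.univ = 1 := by
  simpa [μC] using
    Measure.addHaarMeasure_self (K₀ := (⊤ : TopologicalSpace.PositiveCompacts Cantor))

instance : IsProbabilityMeasure μC := ⟨μC_univ⟩

lemma isClosed_pi_singleton (S : Set ℕ) (x : Cantor) : IsClosed (S.pi fun k => {x k}) :=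
  isClosed_set_pi fun _ _ => isClosed_discrete _

lemma μC_pi_singleton (S : Finset ℕ) (x : Cantor) :
    μC ((S : Set ℕ).pi fun k => {x k}) = 2⁻¹ ^ S.card := by
  induction S using Finset.induction_on generalizing x with
  | empty => simp
  | insert k S hk ih =>
    set δ : Cantor := Pi.single k 1
    have hδ : ∀ j ∈ S, δ j = 0 := fun j hj => Pi.single_eq_of_ne (ne_of_mem_of_not_mem hj hk) _
    have hsplit : ((S : Set ℕ).pi fun j => {x j}) =
        ((insert k S : Finset ℕ) : Set ℕ).pi (fun j => {x j}) ∪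
          ((insert k S : Finset ℕ) : Set ℕ).pi (fun j => {(x + δ) j}) := by
      ext y
      have : ∀ a b : ZMod 2, a = b ∨ a = b + 1 := by decide
      simp only [Finset.coe_insert, Set.mem_union, Set.mem_pi, Set.mem_insert_iff,
        Finset.mem_coe, Set.mem_singleton_iff, Pi.add_apply, forall_eq_or_imp]
      simp +contextual only [hδ, add_zero]
      rw [← or_and_right, and_iff_right]
      simpa [δ] using this (y k) (x k)
    have htrans : μC (((insert k S : Finset ℕ) : Set ℕ).pi fun j => {(x + δ) j}) =
        μC (((insert k S : Finset ℕ) : Set ℕ).pi fun j => {x j}) := by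
      rw [← measure_preimage_add μC δ]
      congr 1
      ext y
      simp [add_comm]
    have hdisj : Disjoint (((insert k S : Finset ℕ) : Set ℕ).pi fun j => {x j})
        (((insert k S : Finset ℕ) : Set ℕ).pi fun j => {(x + δ) j}) := by
      rw [Set.disjoint_left]
      intro y h1 h2
      have := (h1 k (by simp)).symm.trans (h2 k (by simp))
      simp [δ] at this
    have hhalves := ih x
    rw [hsplit, measure_union hdisj (isClosed_pi_singleton _ _).measurableSet, htrans] at hhalves
    rw [Finset.card_insert_of_notMem hk, pow_succ, ← hhalves, ← two_mul, mul_right_comm,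
      ENNReal.mul_inv_cancel two_ne_zero ENNReal.ofNat_ne_top, one_mul]

@[simp] lemma length_res (x : Cantor) (a : ℕ) : (res x a).length = a := by simp [res]

lemma res_eq_res_iff {x y : Cantor} {a : ℕ} : res x a = res y a ↔ ∀ i < a, x i = y i := by
  simp [res, List.map_inj_left]

lemma res_getD (τ : FinSeq) : res (fun k => τ.getD k 0) τ.length = τ :=
  List.ext_getElem (by simp) fun i _ h => by simp [res, h]

lemma res_eq_iff_mem_pi {y : Cantor} {τ : FinSeq} :
    res y τ.length = τ ↔ y ∈ (Finset.range τ.length : Set ℕ).pi fun k => {τ.getD k 0} := by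
  have : res y τ.length = τ ↔ res y τ.length = res (fun k => τ.getD k 0) τ.length := by
    rw [res_getD]
  rw [this, res_eq_res_iff]
  simp

lemma measurableSet_res_eq (a : ℕ) (τ : FinSeq) : MeasurableSet {y | res y a = τ} := by
  by_cases h : τ.length = a
  · subst h
    simp_rw [res_eq_iff_mem_pi, Set.ofPred_mem_eq]
    exact (isClosed_pi_singleton _ _).measurableSet
  · convert MeasurableSet.empty
    ext y
    simp only [Set.mem_ofPred_eq, Set.mem_empty_iff_false, iff_false]
    rintro rfl
    exact h (length_res y a)

lemma μC_res_eq (τ : FinSeq) : μC {y | res y τ.length = τ} = 2⁻¹ ^ τ.length := by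
  simp_rw [res_eq_iff_mem_pi, Set.ofPred_mem_eq, μC_pi_singleton, Finset.card_range]

lemma measure_eq_tsum_res (a : ℕ) (A : Set Cantor) :
    μC A = ∑' τ : FinSeq, μC ({y | res y a = τ} ∩ A) := by
  have hcover : (⋃ τ : FinSeq, {y : Cantor | res y a = τ}) = Set.univ :=
    Set.iUnion_eq_univ_iff.2 fun y => ⟨res y a, rfl⟩
  have hdisj : Pairwise fun σ τ : FinSeq => Disjoint {y : Cantor | res y a = σ} {y | res y a = τ} :=
    fun σ τ hne => Set.disjoint_left.2 fun y hσ hτ => hne (hσ.symm.trans hτ)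
  rw [← Measure.restrict_apply_univ, ← hcover, measure_iUnion hdisj (measurableSet_res_eq a)]
  simp_rw [Measure.restrict_apply (measurableSet_res_eq a _)]

lemma μC_res_eq_inter_exists_eq_one (τ : FinSeq) (W : Finset ℕ) (hW : ∀ k ∈ W, τ.length ≤ k) :
    μC {y | res y τ.length = τ ∧ ∃ k ∈ W, y k = 1} = (1 - 2⁻¹ ^ W.card) * 2⁻¹ ^ τ.length := by
  have hdisj : Disjoint (Finset.range τ.length) W :=
    Finset.disjoint_left.2 fun k hk hkW => (Finset.mem_range.1 hk).not_ge (hW k hkW)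
  have hset : {y | res y τ.length = τ ∧ ∃ k ∈ W, y k = 1} =
      (↑(Finset.range τ.length) : Set ℕ).pi (fun k => {τ.getD k 0}) \
        (↑(Finset.range τ.length ∪ W) : Set ℕ).pi (fun k => {τ.getD k 0}) := by
    ext y
    have hzmod : ∀ a : ZMod 2, a ≠ 0 ↔ a = 1 := by decide
    simp only [Set.mem_ofPred_eq, res_eq_iff_mem_pi, Set.mem_sdiff, Finset.coe_union,
      Set.union_pi, Set.mem_inter_iff, not_and, and_congr_right_iff]
    intro hy
    have hzero : ∀ k ∈ W, τ.getD k 0 = 0 := fun k hk => List.getD_eq_default _ _ (hW k hk)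
    rw [imp_iff_right hy, Set.mem_pi]
    push Not
    simp only [Finset.mem_coe, Set.mem_singleton_iff]
    exact exists_congr fun k => and_congr_right fun hk => by
      rw [hzero k hk]; exact (hzmod _).symm
  rw [hset, measure_sdiff (Set.pi_mono' (fun _ _ => subset_rfl) (by simp))
    (isClosed_pi_singleton _ _).measurableSet.nullMeasurableSet (measure_ne_top _ _),
    μC_pi_singleton, μC_pi_singleton, Finset.card_union_of_disjoint hdisj, Finset.card_range,
    ENNReal.sub_mul fun _ _ => ENNReal.pow_ne_top (by simp), one_mul,
    pow_add, mul_comm]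

lemma measurableSet_of_res_eq {A : Set Cantor} {a : ℕ}
    (hA : ∀ x y, res x a = res y a → x ∈ A → y ∈ A) : MeasurableSet A := by
  have : A = ⋃ (τ : FinSeq) (_ : ∃ x ∈ A, res x a = τ), {y | res y a = τ} := by
    ext y
    simp only [Set.mem_iUnion, Set.mem_ofPred_eq, exists_prop]
    exact ⟨fun hy => ⟨_, ⟨y, hy, rfl⟩, rfl⟩,
      fun ⟨_, ⟨x, hx, hxτ⟩, hyτ⟩ => hA x y (hxτ.trans hyτ.symm) hx⟩
  rw [this]
  exact .iUnion fun τ => .iUnion fun _ => measurableSet_res_eq a τ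

lemma μC_inter_exists_eq_one {A : Set Cantor} {a i : ℕ}
    (hA : ∀ x y, res x a = res y a → x ∈ A → y ∈ A) (W : FinSeq → Finset ℕ)
    (hW : ∀ τ : FinSeq, τ.length = a → (W τ).card = i ∧ ∀ k ∈ W τ, a ≤ k) :
    μC {y ∈ A | ∃ k ∈ W (res y a), y k = 1} = (1 - 2⁻¹ ^ i) * μC A := by
  rw [measure_eq_tsum_res a, measure_eq_tsum_res a A, ← ENNReal.tsum_mul_left]
  refine tsum_congr fun τ => ?_
  by_cases hτ : τ.length = a
  swap
  · have : {y | res y a = τ} = ∅ :=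
      Set.eq_empty_of_forall_notMem fun y hy => hτ (hy ▸ length_res y a)
    simp [this]
  subst hτ
  obtain ⟨hcard, hge⟩ := hW τ rfl
  by_cases hAτ : ∃ x ∈ A, res x τ.length = τ
  · obtain ⟨x, hx, hxτ⟩ := hAτ
    have hfiber : {y | res y τ.length = τ} ⊆ A := fun y hy => hA x y (hxτ.trans hy.symm) hx
    have hset : {y | res y τ.length = τ} ∩ {y ∈ A | ∃ k ∈ W (res y τ.length), y k = 1} =
        {y | res y τ.length = τ ∧ ∃ k ∈ W τ, y k = 1} := by
      ext y
      simp only [Set.mem_inter_iff, Set.mem_ofPred_eq]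
      constructor
      · rintro ⟨h, -, hk⟩
        exact ⟨h, h ▸ hk⟩
      · rintro ⟨h, hk⟩
        exact ⟨h, hfiber h, by rwa [h]⟩
    rw [Set.inter_eq_left.2 hfiber, hset, μC_res_eq, ← hcard,
      μC_res_eq_inter_exists_eq_one τ (W τ) hge]
  · have hempty : {y | res y τ.length = τ} ∩ A = ∅ :=
      Set.eq_empty_of_forall_notMem fun y hy => hAτ ⟨y, hy.2, hy.1⟩
    rw [hempty, measure_empty, mul_zero]
    exact measure_mono_null (Set.inter_subset_inter_right _ fun y hy => hy.1)
      (hempty ▸ measure_empty)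

lemma summable_norm_neg_pow_succ {r : ℝ} (hr0 : 0 ≤ r) (hr1 : r < 1) :
    Summable fun i : ℕ => ‖-r ^ (i + 1)‖ := by
  simpa [abs_of_nonneg hr0, pow_succ] using (summable_geometric_of_lt_one hr0 hr1).mul_right r

lemma multipliable_one_sub_pow_succ {r : ℝ} (hr0 : 0 ≤ r) (hr1 : r < 1) :
    Multipliable fun i : ℕ => 1 - r ^ (i + 1) := by
  simpa [sub_eq_add_neg] using multipliable_one_add_of_summable (summable_norm_neg_pow_succ hr0 hr1)

lemma tprod_one_sub_pow_succ_pos {r : ℝ} (hr0 : 0 ≤ r) (hr1 : r < 1) :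
    0 < ∏' i : ℕ, (1 - r ^ (i + 1)) := by
  have hlt : ∀ i : ℕ, r ^ (i + 1) < 1 := fun i => pow_lt_one₀ hr0 hr1 i.succ_ne_zero
  have hne : ∏' i : ℕ, (1 + -r ^ (i + 1)) ≠ 0 :=
    tprod_one_add_ne_zero_of_summable (fun i => by linarith [hlt i])
      (summable_norm_neg_pow_succ hr0 hr1)
  simp only [← sub_eq_add_neg] at hne
  exact (tprod_nonneg fun i => by linarith [hlt i]).lt_of_ne' hne

lemma ENNReal.ofReal_one_sub_two_inv_pow (k : ℕ) :
    ENNReal.ofReal (1 - (2 : ℝ)⁻¹ ^ k) = 1 - 2⁻¹ ^ k := by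
  rw [ENNReal.ofReal_sub _ (by positivity), ENNReal.ofReal_one, ENNReal.ofReal_pow (by norm_num),
    ENNReal.ofReal_inv_of_pos two_pos, ENNReal.ofReal_ofNat]

section HittingBlocks

variable {n n' : ℕ → ℕ} {u : ℕ → FinSeq → Finset ℕ}

def HitsAt (n' : ℕ → ℕ) (u : ℕ → FinSeq → Finset ℕ) (j : ℕ) (y : Cantor) : Prop :=
  ∃ k ∈ u j (res y (n' j)), y k = 1

def hitsUpTo (n' : ℕ → ℕ) (u : ℕ → FinSeq → Finset ℕ) (m : ℕ) : Set Cantor :=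
  {y | ∀ j, 0 < j → j ≤ m → HitsAt n' u j y}

lemma hitsUpTo_zero : hitsUpTo n' u 0 = Set.univ :=
  Set.eq_univ_of_forall fun _ j hj hj0 => absurd hj (by omega)

lemma hitsUpTo_succ (m : ℕ) :
    hitsUpTo n' u (m + 1) = {y ∈ hitsUpTo n' u m | HitsAt n' u (m + 1) y} := by
  ext y
  constructor
  · intro hy
    exact ⟨fun j hj hjm => hy j hj (hjm.trans m.le_succ), hy (m + 1) m.succ_pos le_rfl⟩
  · rintro ⟨hy, hm⟩ j hj hjm
    rcases hjm.lt_or_eq with hjm | rfl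
    exacts [hy j hj (Nat.lt_succ_iff.1 hjm), hm]

lemma iInter_hitsUpTo : ⋂ m, hitsUpTo n' u m = {y | ∀ j, 0 < j → HitsAt n' u j y} := by
  ext y
  simp only [Set.mem_iInter, Set.mem_ofPred_eq]
  exact ⟨fun h j hj => h j j hj le_rfl, fun h _ j hj _ => h j hj⟩

lemma hitsUpTo_antitone : Antitone (hitsUpTo n' u) :=
  fun _ _ hmm' _ hy j hj hjm => hy j hj (hjm.trans hmm')

variable (hcard : ∀ i, 0 < i → ∀ τ : FinSeq, τ.length = n' i → (u i τ).card = i)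
  (hsub : ∀ i, 0 < i → ∀ τ : FinSeq, τ.length = n' i → ↑(u i τ) ⊆ Set.Ico (n' i) (n (i + 1)))

include hcard hsub in
lemma n'_lt_n_succ {j : ℕ} (hj : 0 < j) : n' j < n (j + 1) := by
  have hlen := length_res 0 (n' j)
  obtain ⟨k, hk⟩ := Finset.card_pos.1 ((hcard j hj _ hlen).symm ▸ hj)
  obtain ⟨hk₁, hk₂⟩ := hsub j hj _ hlen hk
  exact hk₁.trans_lt hk₂

include hcard hsub in
lemma hitsAt_of_eqOn {j : ℕ} (hj : 0 < j) {x y : Cantor} (h : ∀ i < n (j + 1), x i = y i)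
    (hx : HitsAt n' u j x) : HitsAt n' u j y := by
  obtain ⟨k, hk, hxk⟩ := hx
  have hres : res x (n' j) = res y (n' j) :=
    res_eq_res_iff.2 fun i hi => h i (hi.trans (n'_lt_n_succ hcard hsub hj))
  have hkn : k < n (j + 1) := (hsub j hj _ (length_res x _) hk).2
  exact ⟨k, hres ▸ hk, h k hkn ▸ hxk⟩

include hcard hsub in
lemma mem_hitsUpTo_of_res_eq (hn : Monotone n) {m N : ℕ} (hN : n (m + 1) ≤ N) {x y : Cantor}
    (h : res x N = res y N) (hx : x ∈ hitsUpTo n' u m) : y ∈ hitsUpTo n' u m :=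
  fun j hj hjm => hitsAt_of_eqOn hcard hsub hj
    (fun i hi => res_eq_res_iff.1 h i (hi.trans_le ((hn (by omega)).trans hN))) (hx j hj hjm)

include hcard hsub in
lemma limT_tree_hitsAt :
    LimT {σ | ∃ y ∈ {y : Cantor | ∀ j, 0 < j → HitsAt n' u j y}, ∃ m, σ = res y m} =
      {y | ∀ j, 0 < j → HitsAt n' u j y} := by
  ext x
  refine ⟨fun hx j hj => ?_, fun hx m => ⟨x, hx, m, rfl⟩⟩
  obtain ⟨y, hy, m, hxy⟩ := hx (n (j + 1))
  obtain rfl : n (j + 1) = m := by simpa using congrArg List.length hxy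
  exact hitsAt_of_eqOn hcard hsub hj (fun i hi => (res_eq_res_iff.1 hxy i hi).symm) (hy j hj)

include hcard hsub in
lemma μC_hitsUpTo (hn : Monotone n) (hnn' : ∀ i, n i < n' i) (m : ℕ) :
    μC (hitsUpTo n' u m) = ∏ i ∈ Finset.range m, (1 - 2⁻¹ ^ (i + 1)) := by
  induction m with
  | zero => simp [hitsUpTo_zero]
  | succ m ih =>
    rw [hitsUpTo_succ, Finset.prod_range_succ, ← ih, mul_comm]
    exact μC_inter_exists_eq_one
      (fun x y h hx => mem_hitsUpTo_of_res_eq hcard hsub hn (hnn' (m + 1)).le h hx) (u (m + 1))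
      fun τ hτ => ⟨hcard _ m.succ_pos τ hτ, fun k hk => (hsub _ m.succ_pos τ hτ hk).1⟩

end HittingBlocks

theorem stmt6_general (n n' : ℕ → ℕ) (hn : StrictMono n)
    (hnn' : ∀ i, n i < n' i)
    (u : ℕ → FinSeq → Finset ℕ)
    (hcard : ∀ i, 0 < i → ∀ τ : FinSeq, τ.length = n' i → (u i τ).card = i)
    (hsub : ∀ i, 0 < i → ∀ τ : FinSeq, τ.length = n' i →
      ↑(u i τ) ⊆ Set.Ico (n' i) (n (i + 1)))
    (B : Set Cantor) (hB : B = {y : Cantor | ∀ j, 0 < j → ∃ k ∈ u j (res y (n' j)), y k = 1})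
    (T : Set FinSeq) (hTdef : T = {σ | ∃ y ∈ B, ∃ m, σ = res y m}) :
    μC (LimT T) = ENNReal.ofReal (∏' i : ℕ, (1 - (2 : ℝ)⁻¹ ^ (i + 1))) ∧
      0 < μC (LimT T) := by
  subst hTdef hB
  have hLim : LimT {σ | ∃ y ∈ {y : Cantor | ∀ j, 0 < j → ∃ k ∈ u j (res y (n' j)), y k = 1},
      ∃ m, σ = res y m} = ⋂ m, hitsUpTo n' u m := by
    rw [iInter_hitsUpTo]
    exact limT_tree_hitsAt hcard hsub
  have hr : (0 : ℝ) ≤ 2⁻¹ ∧ (2⁻¹ : ℝ) < 1 := by norm_num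
  have hlim_prod :=
    ENNReal.tendsto_ofReal (multipliable_one_sub_pow_succ hr.1 hr.2).hasProd.tendsto_prod_nat
  have hlim_μ : Filter.Tendsto (fun m => μC (hitsUpTo n' u m)) Filter.atTop
      (nhds (μC (⋂ m, hitsUpTo n' u m))) :=
    tendsto_measure_iInter_atTop (fun m => (measurableSet_of_res_eq fun x y h hx =>
        mem_hitsUpTo_of_res_eq hcard hsub hn.monotone le_rfl h hx).nullMeasurableSet)
      hitsUpTo_antitone ⟨0, measure_ne_top _ _⟩
  have hμ : μC (⋂ m, hitsUpTo n' u m) = ENNReal.ofReal (∏' i : ℕ, (1 - (2 : ℝ)⁻¹ ^ (i + 1))) := by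
    refine tendsto_nhds_unique hlim_μ (hlim_prod.congr fun m => ?_)
    rw [μC_hitsUpTo hcard hsub hn.monotone hnn',
      ENNReal.ofReal_prod_of_nonneg fun i _ => sub_nonneg.2 (pow_le_one₀ hr.1 hr.2.le)]
    exact Finset.prod_congr rfl fun i _ => ENNReal.ofReal_one_sub_two_inv_pow _
  rw [hLim, hμ]
  exact ⟨rfl, ENNReal.ofReal_pos.2 (tprod_one_sub_pow_succ_pos hr.1 hr.2)⟩

/-- measure computation for the tree of Lemma 10. -/
theorem stmt6 (n n' : ℕ → ℕ) (hn : StrictMono n) (h0 : n 0 = 0)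
    (hnn' : ∀ i, n i < n' i) (hgap : ∀ i, n' i + i * 2 ^ n' i < n (i + 1))
    (u : ℕ → FinSeq → Finset ℕ)
    (hcard : ∀ i, 0 < i → ∀ τ : FinSeq, τ.length = n' i → (u i τ).card = i)
    (hsub : ∀ i, 0 < i → ∀ τ : FinSeq, τ.length = n' i →
      ↑(u i τ) ⊆ Set.Ico (n' i) (n (i + 1)))
    (hdisj : ∀ i, 0 < i → ∀ τ₁ τ₂ : FinSeq, τ₁.length = n' i → τ₂.length = n' i →
      τ₁ ≠ τ₂ → Disjoint (u i τ₁) (u i τ₂))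
    (B : Set Cantor) (hB : B = {y : Cantor | ∀ j, 0 < j → ∃ k ∈ u j (res y (n' j)), y k = 1})
    (T : Set FinSeq) (hTdef : T = {σ | ∃ y ∈ B, ∃ m, σ = res y m}) :
    μC (LimT T) = ENNReal.ofReal (∏' i : ℕ, (1 - (2 : ℝ)⁻¹ ^ (i + 1))) ∧
      0 < μC (LimT T) :=
  stmt6_general n n' hn hnn' u hcard hsub B hB T hTdef
end

section
/- For a subset X of 2^ω the following are equivalent: (b) for every corset f there is a tree S of width f with X ⊆ (Lim S)^{fin}; (c) for every corset f there are trees S_m (m < ω), each almost of width f, with X ⊆ ⋃_m (Lim S_m)^{fin}; (d) for every corset f there are trees S_m (m < ω) of width f with X ⊆ ⋃_m Lim S_m. -/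
open MeasureTheory Pointwise

/-! ### helper lemmas -/

lemma res_length (x : Cantor) (n : ℕ) : (res x n).length = n := by simp [res]

lemma res_prefix (x : Cantor) {n m : ℕ} (h : n ≤ m) : res x n <+: res x m := by
  have : List.range n <+: List.range m := by
    rw [List.prefix_iff_eq_take, List.take_range]; simp [Nat.min_eq_left h]
  exact this.map x

lemma finite_length_eq (n : ℕ) : {l : FinSeq | l.length = n}.Finite := by
  induction n with
  | zero =>
    have : {l : FinSeq | l.length = 0} = {([] : FinSeq)} := by
      ext l; simp [List.length_eq_zero_iff]
    rw [this]; exact Set.finite_singleton _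
  | succ n ih =>
    have hsub : {l : FinSeq | l.length = n+1} ⊆
        Set.image2 List.cons Set.univ {l | l.length = n} := by
      rintro l hl
      cases l with
      | nil => simp at hl
      | cons a l => exact ⟨a, trivial, l, by simpa using hl, rfl⟩
    exact (Set.Finite.image2 _ Set.finite_univ ih).subset hsub

lemma slice_finite (S : Set FinSeq) (n : ℕ) : {τ ∈ S | τ.length = n}.Finite :=
  (finite_length_eq n).subset (fun τ hτ => hτ.2)

lemma exists_mem_length (T : Set FinSeq) (hT : IsTree T) (n : ℕ) : ∃ τ ∈ T, τ.length = n := by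
  obtain ⟨ν, hν⟩ := hT.1
  rcases lt_or_ge ν.length n with h | h
  · obtain ⟨τ, hτ, _, hlen⟩ := hT.2.2 ν hν n h
    exact ⟨τ, hτ, hlen⟩
  · exact ⟨ν.take n, hT.2.1 _ ν (List.take_prefix n ν) hν, by simp [Nat.min_eq_left h]⟩

lemma prefix_append_drop {l₁ l₂ : FinSeq} (h : l₁ <+: l₂) : l₁ ++ l₂.drop l₁.length = l₂ := by
  conv_rhs => rw [← List.take_append_drop l₁.length l₂]
  rw [← List.prefix_iff_eq_take.1 h]

/-! ### the zero tree -/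

def zeroTree : Set FinSeq := {τ | τ = List.replicate τ.length 0}

lemma mem_zeroTree {τ : FinSeq} : τ ∈ zeroTree ↔ τ = List.replicate τ.length 0 := Iff.rfl

lemma zeroTree_isTree : IsTree zeroTree := by
  refine ⟨⟨[], rfl⟩, ?_, ?_⟩
  · intro σ τ hp hτ
    rw [mem_zeroTree] at hτ ⊢
    have h2 : σ = τ.take σ.length := List.prefix_iff_eq_take.1 hp
    have hle : σ.length ≤ τ.length := hp.length_le
    conv_lhs => rw [h2, hτ]
    rw [List.take_replicate]
    congr 1
    omega
  · intro σ hσ n hn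
    rw [mem_zeroTree] at hσ
    refine ⟨List.replicate n 0, ?_, ?_, by simp⟩
    · rw [mem_zeroTree]; simp
    · rw [List.prefix_iff_eq_take, List.take_replicate]
      conv_lhs => rw [hσ]
      congr 1
      omega

lemma zeroTree_slice (n : ℕ) : {τ ∈ zeroTree | τ.length = n} ⊆ {List.replicate n 0} := by
  rintro τ ⟨h1, h2⟩
  rw [mem_zeroTree] at h1
  rw [Set.mem_singleton_iff]
  conv_lhs => rw [h1]
  rw [h2]

lemma zeroTree_width (f : ℕ → ℕ) (hf : ∀ n, 0 < f n) : widthLe zeroTree f := by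
  intro n
  calc {τ ∈ zeroTree | τ.length = n}.ncard ≤ ({List.replicate n 0} : Set FinSeq).ncard :=
        Set.ncard_le_ncard (zeroTree_slice n) (Set.finite_singleton _)
    _ = 1 := Set.ncard_singleton _
    _ ≤ f n := hf n

/-! ### shift trees -/

def shiftTree (S : Set FinSeq) (σ : FinSeq) : Set FinSeq :=
  {τ | (τ.length ≤ σ.length ∧ τ <+: σ) ∨
    (σ.length < τ.length ∧ σ <+: τ ∧
      ∃ η ∈ S, η.length = τ.length ∧ τ.drop σ.length = η.drop σ.length)}

lemma shiftTree_isTree {S : Set FinSeq} (hS : IsTree S) (σ : FinSeq) :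
    IsTree (shiftTree S σ) := by
  refine ⟨⟨[], Or.inl ⟨by simp, List.nil_prefix⟩⟩, ?_, ?_⟩
  · -- downward closed
    rintro ρ τ hp (⟨h1, h2⟩ | ⟨h1, h2, η, hη, hlen, hdrop⟩)
    · exact Or.inl ⟨le_trans hp.length_le h1, hp.trans h2⟩
    · rcases le_or_gt ρ.length σ.length with hc | hc
      · exact Or.inl ⟨hc, List.prefix_of_prefix_length_le hp h2 hc⟩
      · have hρτ : ρ.length ≤ τ.length := hp.length_le
        refine Or.inr ⟨hc, List.prefix_of_prefix_length_le h2 hp hc.le, η.take ρ.length,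
          hS.2.1 _ η (List.take_prefix _ _) hη, ?_, ?_⟩
        · rw [List.length_take]; omega
        · conv_lhs => rw [List.prefix_iff_eq_take.1 hp]
          rw [List.drop_take, List.drop_take, hdrop]
  · -- extension
    rintro τ (⟨h1, h2⟩ | ⟨h1, h2, η, hη, hlen, hdrop⟩) n hn
    · rcases le_or_gt n σ.length with hc | hc
      · refine ⟨σ.take n, Or.inl ⟨by rw [List.length_take]; omega, List.take_prefix _ _⟩, ?_,
          by rw [List.length_take]; omega⟩
        rw [List.prefix_iff_eq_take, List.take_take, Nat.min_eq_left hn.le]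
        exact List.prefix_iff_eq_take.1 h2
      · obtain ⟨η, hη, hηlen⟩ := exists_mem_length S hS n
        refine ⟨σ ++ η.drop σ.length, Or.inr ⟨?_, List.prefix_append _ _, η, hη, ?_, ?_⟩,
          h2.trans (List.prefix_append _ _), ?_⟩
        · simp only [List.length_append, List.length_drop]; omega
        · simp only [List.length_append, List.length_drop]; omega
        · rw [List.drop_left]
        · simp only [List.length_append, List.length_drop]; omega
    · obtain ⟨η₂, hη₂, hpre, hη₂len⟩ := hS.2.2 η hη n (by omega)
      have hτη : η.length = τ.length := hlen
      refine ⟨τ ++ η₂.drop τ.length,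
        Or.inr ⟨by simp only [List.length_append, List.length_drop]; omega,
          h2.trans (List.prefix_append _ _),
          η₂, hη₂, by simp only [List.length_append, List.length_drop]; omega, ?_⟩,
        List.prefix_append _ _, by simp only [List.length_append, List.length_drop]; omega⟩
      have h₂ : η₂ = η ++ η₂.drop η.length := (prefix_append_drop hpre).symm
      calc (τ ++ η₂.drop τ.length).drop σ.length
          = τ.drop σ.length ++ η₂.drop τ.length := by
            rw [List.drop_append_of_le_length h1.le]
        _ = η.drop σ.length ++ η₂.drop η.length := by rw [hdrop, hτη]
        _ = (η ++ η₂.drop η.length).drop σ.length := by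
            rw [List.drop_append_of_le_length (by omega)]
        _ = η₂.drop σ.length := by rw [← h₂]

lemma shiftTree_slice_le {S : Set FinSeq} (σ : FinSeq) {n : ℕ} (hn : n ≤ σ.length) :
    {τ ∈ shiftTree S σ | τ.length = n} ⊆ {σ.take n} := by
  rintro τ ⟨(⟨h1, h2⟩ | ⟨h1, _, _⟩), hτlen⟩
  · have h3 : τ = σ.take τ.length := List.prefix_iff_eq_take.1 h2
    rw [Set.mem_singleton_iff]
    conv_lhs => rw [h3]
    rw [hτlen]
  · omega

lemma shiftTree_width {S : Set FinSeq} {f : ℕ → ℕ} (σ : FinSeq) (hf : ∀ n, 0 < f n)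
    (h : ∀ n, σ.length < n → {τ ∈ S | τ.length = n}.ncard ≤ f n) :
    widthLe (shiftTree S σ) f := by
  intro n
  rcases le_or_gt n σ.length with hc | hc
  · calc {τ ∈ shiftTree S σ | τ.length = n}.ncard ≤ ({σ.take n} : Set FinSeq).ncard :=
        Set.ncard_le_ncard (shiftTree_slice_le σ hc) (Set.finite_singleton _)
      _ = 1 := Set.ncard_singleton _
      _ ≤ f n := hf n
  · -- map τ ↦ τ.drop σ.length is injective on the slice and lands in drop '' slice S n
    have hinj : Set.InjOn (fun τ : FinSeq => τ.drop σ.length)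
        {τ ∈ shiftTree S σ | τ.length = n} := by
      rintro τ₁ ⟨hτ₁, hl₁⟩ τ₂ ⟨hτ₂, hl₂⟩ heq
      have p₁ : σ <+: τ₁ := by rcases hτ₁ with ⟨h1, _⟩ | ⟨_, h2, _⟩; omega; exact h2
      have p₂ : σ <+: τ₂ := by rcases hτ₂ with ⟨h1, _⟩ | ⟨_, h2, _⟩; omega; exact h2
      dsimp only at heq
      rw [← prefix_append_drop p₁, ← prefix_append_drop p₂, heq]
    have himg : (fun τ : FinSeq => τ.drop σ.length) '' {τ ∈ shiftTree S σ | τ.length = n} ⊆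
        (fun η : FinSeq => η.drop σ.length) '' {τ ∈ S | τ.length = n} := by
      rintro ρ ⟨τ, ⟨hτ, hτl⟩, rfl⟩
      rcases hτ with ⟨h1, _⟩ | ⟨_, _, η, hη, hηl, hdrop⟩
      · omega
      · exact ⟨η, ⟨hη, by omega⟩, hdrop.symm⟩
    calc {τ ∈ shiftTree S σ | τ.length = n}.ncard
        = ((fun τ : FinSeq => τ.drop σ.length) '' {τ ∈ shiftTree S σ | τ.length = n}).ncard :=
          (Set.ncard_image_of_injOn hinj).symm
      _ ≤ ((fun η : FinSeq => η.drop σ.length) '' {τ ∈ S | τ.length = n}).ncard :=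
          Set.ncard_le_ncard himg ((slice_finite S n).image _)
      _ ≤ {τ ∈ S | τ.length = n}.ncard := Set.ncard_image_le (slice_finite S n)
      _ ≤ f n := h n hc

lemma mem_LimT_shiftTree {S : Set FinSeq} {σ : FinSeq} {x y : Cantor} (hx : x ∈ LimT S)
    (hagree : ∀ n, σ.length ≤ n → y n = x n) (hσ : σ = res y σ.length) :
    y ∈ LimT (shiftTree S σ) := by
  intro n
  rcases le_or_gt n σ.length with hc | hc
  · exact Or.inl ⟨by rw [res_length]; exact hc, hσ ▸ res_prefix y hc⟩
  · refine Or.inr ⟨by rw [res_length]; exact hc, hσ ▸ res_prefix y hc.le, res x n, hx n,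
      by rw [res_length, res_length], ?_⟩
    apply List.ext_getElem
    · simp [res]
    · intro i h₁ h₂
      simp only [res, List.getElem_drop, List.getElem_map, List.getElem_range]
      exact hagree _ (Nat.le_add_right _ _)

lemma ncard_biUnion_le {ι α : Type*} (t : Finset ι) (u : ι → Set α) :
    (⋃ i ∈ t, u i).ncard ≤ ∑ i ∈ t, (u i).ncard := by
  classical
  induction t using Finset.induction_on with
  | empty => simp
  | @insert a s h ih =>
    rw [Finset.set_biUnion_insert, Finset.sum_insert h]
    exact (Set.ncard_union_le _ _).trans (Nat.add_le_add_left ih _)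

open Classical in
/-- The conditional shift tree used in (c) → (d). -/
noncomputable def condTree (S : Set FinSeq) (f : ℕ → ℕ) (σ : FinSeq) : Set FinSeq :=
  if (∀ n, σ.length < n → {τ ∈ S | τ.length = n}.ncard ≤ f n) ∧ IsTree S then
    shiftTree S σ else zeroTree

lemma condTree_isTree (S : Set FinSeq) (f : ℕ → ℕ) (σ : FinSeq) : IsTree (condTree S f σ) := by
  rw [condTree]
  split
  · next h => exact shiftTree_isTree h.2 σ
  · exact zeroTree_isTree

lemma condTree_width (S : Set FinSeq) {f : ℕ → ℕ} (hf : ∀ n, 0 < f n) (σ : FinSeq) :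
    widthLe (condTree S f σ) f := by
  rw [condTree]
  split
  · next h => exact shiftTree_width σ hf h.1
  · exact zeroTree_width f hf

/-! ### the three implications -/

lemma b_to_c (X : Set Cantor)
    (hb : ∀ f : ℕ → ℕ, Corset f → ∃ S : Set FinSeq,
      IsTree S ∧ widthLe S f ∧ X ⊆ finEq (LimT S)) :
    ∀ f : ℕ → ℕ, Corset f → ∃ S : ℕ → Set FinSeq,
      (∀ m, IsTree (S m) ∧ almostWidthLe (S m) f) ∧ X ⊆ ⋃ m, finEq (LimT (S m)) := by
  intro f hf
  obtain ⟨S, hT, hw, hX⟩ := hb f hf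
  refine ⟨fun _ => S, fun m => ⟨hT, Filter.Eventually.of_forall hw⟩, ?_⟩
  intro x hx
  exact Set.mem_iUnion.2 ⟨0, hX hx⟩

lemma c_to_d (X : Set Cantor)
    (hc : ∀ f : ℕ → ℕ, Corset f → ∃ S : ℕ → Set FinSeq,
      (∀ m, IsTree (S m) ∧ almostWidthLe (S m) f) ∧ X ⊆ ⋃ m, finEq (LimT (S m))) :
    ∀ f : ℕ → ℕ, Corset f → ∃ S : ℕ → Set FinSeq,
      (∀ m, IsTree (S m) ∧ widthLe (S m) f) ∧ X ⊆ ⋃ m, LimT (S m) := by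
  intro f hf
  obtain ⟨S, hS, hX⟩ := hc f hf
  obtain ⟨e, he⟩ := exists_surjective_nat (ℕ × FinSeq)
  refine ⟨fun k => condTree (S (e k).1) f (e k).2,
    fun k => ⟨condTree_isTree _ _ _, condTree_width _ hf.2.1 _⟩, ?_⟩
  intro y hy
  have hy' := Set.mem_iUnion.1 (hX hy)
  obtain ⟨m, x, hxLim, hev⟩ := hy'
  obtain ⟨N, hN⟩ := Filter.eventually_atTop.1 hev
  obtain ⟨n₀, hn₀⟩ := Filter.eventually_atTop.1 (hS m).2
  have hcond : (∀ n, (res y (max N n₀)).length < n →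
      {τ ∈ S m | τ.length = n}.ncard ≤ f n) ∧ IsTree (S m) := by
    refine ⟨fun n hn => hn₀ n ?_, (hS m).1⟩
    rw [res_length] at hn; omega
  have hmem : y ∈ LimT (condTree (S m) f (res y (max N n₀))) := by
    rw [condTree, if_pos hcond]
    refine mem_LimT_shiftTree hxLim (fun n hn => hN n ?_) (by rw [res_length])
    rw [res_length] at hn; omega
  obtain ⟨k, hk⟩ := he (m, res y (max N n₀))
  refine Set.mem_iUnion.2 ⟨k, ?_⟩
  show y ∈ LimT (condTree (S (e k).1) f (e k).2)
  rw [hk]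
  exact hmem

lemma d_to_b (X : Set Cantor)
    (hd : ∀ f : ℕ → ℕ, Corset f → ∃ S : ℕ → Set FinSeq,
      (∀ m, IsTree (S m) ∧ widthLe (S m) f) ∧ X ⊆ ⋃ m, LimT (S m)) :
    ∀ f : ℕ → ℕ, Corset f → ∃ S : Set FinSeq,
      IsTree S ∧ widthLe S f ∧ X ⊆ finEq (LimT S) := by
  intro f hf
  obtain ⟨hmono, hpos, htend⟩ := hf
  have hgmono : Monotone (fun n => Nat.sqrt (f n)) := fun a b hab => Nat.sqrt_le_sqrt (hmono hab)
  have hgpos : ∀ n, 0 < Nat.sqrt (f n) := fun n => Nat.sqrt_pos.2 (hpos n)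
  have hgtend : Filter.Tendsto (fun n => Nat.sqrt (f n)) Filter.atTop Filter.atTop := by
    rw [Filter.tendsto_atTop_atTop]
    intro b
    obtain ⟨i, hi⟩ := Filter.tendsto_atTop_atTop.1 htend (b * b)
    exact ⟨i, fun a ha => Nat.le_sqrt.2 (hi a ha)⟩
  obtain ⟨S, hS, hX⟩ := hd (fun n => Nat.sqrt (f n)) ⟨hgmono, hgpos, hgtend⟩
  have hex : ∀ m : ℕ, ∃ n, m + 3 ≤ Nat.sqrt (f n) :=
    fun m => (hgtend.eventually_ge_atTop (m + 3)).exists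
  choose nm hnm using hex
  refine ⟨⋃ m, shiftTree (S m) (List.replicate (nm m) 0), ⟨?_, ?_, ?_⟩, ?_, ?_⟩
  · -- nonempty
    obtain ⟨τ, hτ⟩ := (shiftTree_isTree (hS 0).1 (List.replicate (nm 0) 0)).1
    exact ⟨τ, Set.mem_iUnion.2 ⟨0, hτ⟩⟩
  · -- downward closed
    intro σ τ hp hτ
    obtain ⟨m, hm⟩ := Set.mem_iUnion.1 hτ
    exact Set.mem_iUnion.2 ⟨m, (shiftTree_isTree (hS m).1 _).2.1 σ τ hp hm⟩
  · -- extension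
    intro σ hσ n hn
    obtain ⟨m, hm⟩ := Set.mem_iUnion.1 hσ
    obtain ⟨τ, hτ, hpre, hlen⟩ := (shiftTree_isTree (hS m).1 _).2.2 σ hm n hn
    exact ⟨τ, Set.mem_iUnion.2 ⟨m, hτ⟩, hpre, hlen⟩
  · -- width
    intro n
    have hwTm : ∀ m, {τ ∈ shiftTree (S m) (List.replicate (nm m) 0) | τ.length = n}.ncard ≤
        Nat.sqrt (f n) :=
      fun m => shiftTree_width _ hgpos (fun n' _ => (hS m).2 n') n
    have hcov : {τ ∈ ⋃ m, shiftTree (S m) (List.replicate (nm m) 0) | τ.length = n} ⊆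
        {List.replicate n 0} ∪ ⋃ m ∈ Finset.range (Nat.sqrt (f n) - 2),
          {τ ∈ shiftTree (S m) (List.replicate (nm m) 0) | τ.length = n} := by
      rintro τ ⟨hτ, hlen⟩
      obtain ⟨m, hm⟩ := Set.mem_iUnion.1 hτ
      rcases le_or_gt n (nm m) with hc | hc
      · left
        have h1 := shiftTree_slice_le (S := S m) (List.replicate (nm m) 0)
          (n := n) (by rw [List.length_replicate]; exact hc) ⟨hm, hlen⟩
        rw [Set.mem_singleton_iff] at h1 ⊢
        rw [h1, List.take_replicate]
        congr 1
        omega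
      · right
        have hms : m + 3 ≤ Nat.sqrt (f n) := (hnm m).trans (hgmono hc.le)
        refine Set.mem_biUnion (Finset.mem_range.2 (by omega)) ⟨hm, hlen⟩
    have hfin : ∀ m, {τ ∈ shiftTree (S m) (List.replicate (nm m) 0) | τ.length = n}.Finite :=
      fun m => slice_finite _ n
    calc {τ ∈ ⋃ m, shiftTree (S m) (List.replicate (nm m) 0) | τ.length = n}.ncard
        ≤ ({List.replicate n 0} ∪ ⋃ m ∈ Finset.range (Nat.sqrt (f n) - 2),
            {τ ∈ shiftTree (S m) (List.replicate (nm m) 0) | τ.length = n} : Set FinSeq).ncard := by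
          refine Set.ncard_le_ncard hcov ?_
          exact (Set.finite_singleton _).union
            ((Finset.range (Nat.sqrt (f n) - 2)).finite_toSet.biUnion fun m _ => hfin m)
      _ ≤ 1 + ∑ m ∈ Finset.range (Nat.sqrt (f n) - 2),
            {τ ∈ shiftTree (S m) (List.replicate (nm m) 0) | τ.length = n}.ncard := by
          refine (Set.ncard_union_le _ _).trans ?_
          rw [Set.ncard_singleton]
          exact Nat.add_le_add_left (ncard_biUnion_le _ _) 1
      _ ≤ 1 + (Nat.sqrt (f n) - 2) * Nat.sqrt (f n) := by
          refine Nat.add_le_add_left ?_ 1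
          calc ∑ m ∈ Finset.range (Nat.sqrt (f n) - 2),
                {τ ∈ shiftTree (S m) (List.replicate (nm m) 0) | τ.length = n}.ncard
              ≤ ∑ _m ∈ Finset.range (Nat.sqrt (f n) - 2), Nat.sqrt (f n) :=
                Finset.sum_le_sum fun m _ => hwTm m
            _ = (Nat.sqrt (f n) - 2) * Nat.sqrt (f n) := by
                rw [Finset.sum_const, Finset.card_range, smul_eq_mul]
      _ ≤ f n := by
          have hss : Nat.sqrt (f n) * Nat.sqrt (f n) ≤ f n := Nat.sqrt_le (f n)
          rcases le_or_gt (Nat.sqrt (f n)) 2 with hs2 | hs2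
          · have h0 : Nat.sqrt (f n) - 2 = 0 := by omega
            rw [h0, Nat.zero_mul]
            exact hpos n
          · obtain ⟨u, hu⟩ : ∃ u, Nat.sqrt (f n) = u + 3 := ⟨Nat.sqrt (f n) - 3, by omega⟩
            rw [hu] at hss ⊢
            have : u + 3 - 2 = u + 1 := by omega
            rw [this]
            nlinarith
  · -- cover
    intro x hx
    obtain ⟨m, hm⟩ := Set.mem_iUnion.1 (hX hx)
    refine ⟨fun n => if n < nm m then 0 else x n, ?_, ?_⟩
    · have hmem : (fun n => if n < nm m then 0 else x n) ∈
          LimT (shiftTree (S m) (List.replicate (nm m) 0)) := by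
        refine mem_LimT_shiftTree (x := x) hm (fun n hn => ?_) ?_
        · rw [List.length_replicate] at hn
          exact if_neg (by omega)
        · rw [List.length_replicate]
          refine List.ext_getElem (by simp [res]) fun i h₁ h₂ => ?_
          rw [List.getElem_replicate]
          simp only [res, List.length_replicate] at h₁ ⊢
          rw [List.getElem_map, List.getElem_range, if_pos (by simpa using h₁)]
      exact fun n => Set.mem_iUnion.2 ⟨m, hmem n⟩
    · refine Filter.eventually_atTop.2 ⟨nm m, fun n hn => ?_⟩
      exact (if_neg (by omega)).symm

/-- Theorem 13, (b) ↔ (c) ↔ (d). -/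
theorem stmt8 (X : Set Cantor) :
    ((∀ f : ℕ → ℕ, Corset f → ∃ S : Set FinSeq,
        IsTree S ∧ widthLe S f ∧ X ⊆ finEq (LimT S)) ↔
      (∀ f : ℕ → ℕ, Corset f → ∃ S : ℕ → Set FinSeq,
        (∀ m, IsTree (S m) ∧ almostWidthLe (S m) f) ∧ X ⊆ ⋃ m, finEq (LimT (S m)))) ∧
    ((∀ f : ℕ → ℕ, Corset f → ∃ S : ℕ → Set FinSeq,
        (∀ m, IsTree (S m) ∧ almostWidthLe (S m) f) ∧ X ⊆ ⋃ m, finEq (LimT (S m))) ↔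
      (∀ f : ℕ → ℕ, Corset f → ∃ S : ℕ → Set FinSeq,
        (∀ m, IsTree (S m) ∧ widthLe (S m) f) ∧ X ⊆ ⋃ m, LimT (S m))) := by
  refine ⟨⟨b_to_c X, fun h => d_to_b X (c_to_d X h)⟩,
    ⟨c_to_d X, fun h => b_to_c X (d_to_b X h)⟩⟩
end
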